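/- Let (V, r, parent) be an arborescence, with at least one non-root vertex, with edge weights c, w : V → ℝ such that c v > 0 and w v > 0 for all v ≠ r, satisfying both the combined triangle inequality and the combined 2-optimality condition. Let m be the number of non-root vertices, set c(A) = Σ_{v ≠ r} c(v), w(A) = Σ_{v ≠ r} w(v), and k = c(A) / w(A), and suppose k ≥ 18. Then (m : ℝ) ≥ (k/6)^(k/6) (real power). -/

import Mathlib

/-- `(r, parent)` is an arborescence on `V`: the root is a fixed point of
`parent`, and every vertex reaches the root by iterating `parent`. -/
def IsArborescence {V : Type} (r : V) (parent : V → V) : Prop :=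
  parent r = r ∧ ∀ v : V, ∃ n : ℕ, parent^[n] v = r

open Classical in
/-- The children of a vertex `y`. -/
noncomputable def children {V : Type} [Fintype V] (parent : V → V) (y : V) : Finset V :=
  Finset.univ.filter fun u => parent u = y ∧ u ≠ y

open Classical in
/-- The descendants of a vertex `v` (including `v` itself): the vertex set of the
sub-arborescence below the edge entering `v`. -/
noncomputable def desc {V : Type} [Fintype V] (parent : V → V) (v : V) : Finset V :=
  Finset.univ.filter fun u => ∃ n : ℕ, parent^[n] u = v

open Classical in
/-- The non-root vertices, corresponding to the edges of the arborescence. -/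
noncomputable def nonRoot {V : Type} [Fintype V] (r : V) : Finset V :=
  Finset.univ.filter fun v => v ≠ r

/-- The combined triangle inequality. -/
def CombinedTriangle {V : Type} [Fintype V] (r : V) (parent : V → V) (c w : V → ℝ) : Prop :=
  ∀ v : V, v ≠ r → c v ≤ w v + ∑ u ∈ children parent v, c u

open Classical in
/-- The combined 2-optimality condition. -/
noncomputable def CombinedTwoOpt {V : Type} [Fintype V] (r : V) (parent : V → V) (c w : V → ℝ) : Prop :=
  ∀ v : V, v ≠ r → ∀ z ∈ children parent v,
    c v + c z ≤ w v + ∑ u ∈ (children parent v).erase z, c u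
/-!
Give every vertex `v` a multiplier `a v`, defined top-down by `a r = 0` and
`a v = max 1 (1 + a p * (1 - 2 m_v / (m_p - 1)))` for `v ≠ r`, where `p` is the parent of `v`
and `m_v` the number of vertices of the subtree at `v`. At each `v ≠ r`, averaging the
2-optimality conditions over the children `z` with weights `m_z / (m_v - 1)` (which sum to at
most `1`) and filling the remaining weight with the triangle inequality, then summing these
inequalities with weights `a v` over the tree, gives `c(A) ≤ ∑ a v * w v`; hence some `a v ≥ k`.
On the other hand `ψ x = x log (4x) - x` satisfies `ψ (a v) ≤ ψ 1 + log (m / m_v)`, by induction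
down the tree, so `ψ k ≤ ψ 1 + log m`, and this forces `m ≥ (k/6)^(k/6)`.
-/

open Finset Real

section Potential

noncomputable def potential (x : ℝ) : ℝ := x * log (4 * x) - x

lemma potential_sub_potential_le {a b : ℝ} (ha : 0 < a) (hb : 0 < b) :
    potential b - potential a ≤ (b - a) * log (4 * b) := by
  have hlog : a * log (b / a) ≤ b - a := by
    calc a * log (b / a) ≤ a * (b / a - 1) :=
          mul_le_mul_of_nonneg_left (log_le_sub_one_of_pos (by positivity)) ha.le
      _ = b - a := by field_simp
  have hdiff : potential b - potential a = a * log (b / a) + (b - a) * (log (4 * b) - 1) := by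
    simp only [potential]
    rw [log_div hb.ne' ha.ne', log_mul four_ne_zero hb.ne', log_mul four_ne_zero ha.ne']
    ring
  linarith

lemma potential_le_potential {a b : ℝ} (ha : 1 / 4 ≤ a) (hab : a ≤ b) :
    potential a ≤ potential b := by
  have hlog : 0 ≤ log (4 * a) := log_nonneg (by linarith)
  have := potential_sub_potential_le (a := b) (b := a) (by linarith) (by linarith)
  nlinarith

lemma log_eight : log 8 = 3 * log 2 := by
  rw [show (8 : ℝ) = 2 ^ 3 by norm_num, log_pow]
  norm_num

lemma two_le_log_of_eight_le {x : ℝ} (hx : 8 ≤ x) : 2 ≤ log x := by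
  linarith [log_le_log (by norm_num) hx, log_eight, log_two_gt_d9]

lemma potential_max_one_le {A x y : ℝ} (hA : 1 ≤ A) (hx : 0 < x) (hxy : x ≤ y) :
    potential (max 1 (1 + A * (1 - 2 * x / y))) ≤ potential A + log y - log x := by
  have hy : 0 < y := hx.trans_le hxy
  have hlog : 0 ≤ log y - log x := sub_nonneg.2 (log_le_log hx hxy)
  set val := 1 + A * (1 - 2 * x / y) with hval_def
  rcases le_total val A with hvalA | hAval
  · linarith [potential_le_potential (by norm_num) (max_le hA hvalA)]
  rw [max_eq_right (hA.trans hAval)]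
  set u := 2 * A * x / y with hu_def
  have hu : 0 < u := by positivity
  have hval : val = 1 + A - u := by rw [hval_def, hu_def]; ring
  have hlogu : log u = log 2 + log A + log x - log y := by
    rw [hu_def, log_div (by positivity) hy.ne', log_mul (by positivity) hx.ne',
      log_mul two_ne_zero (by positivity)]
  have hL : 2 ≤ log (8 * A) := two_le_log_of_eight_le (by linarith)
  have hlog8A : log (8 * A) = 3 * log 2 + log A := by
    rw [log_mul (by norm_num) (by positivity), log_eight]
  have hlog4u : log 2 + log 2 + log u ≤ 2 * u := by
    have := log_le_sub_one_of_pos (show 0 < 2 * u by positivity)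
    rw [log_mul two_ne_zero hu.ne'] at this
    linarith [log_two_lt_d9]
  have hstep := potential_sub_potential_le (a := A) (by linarith) (show 0 < val by linarith)
  have hlog4val : log (4 * val) ≤ log (8 * A) := log_le_log (by linarith) (by linarith)
  nlinarith [mul_le_mul_of_nonneg_left hlog4val (show 0 ≤ 1 - u by linarith),
    mul_le_mul_of_nonneg_left hL hu.le]

lemma potential_one_add_mul_log_le {k : ℝ} (hk : 2 ≤ k) :
    potential 1 + k / 6 * log (k / 6) ≤ potential k := by
  have hlog : log (k / 6) ≤ log (4 * k) := log_le_log (by positivity) (by linarith)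
  have hL : 2 ≤ log (4 * k) := two_le_log_of_eight_le (by linarith)
  have hlog4 : log 4 = 2 * log 2 := by
    rw [show (4 : ℝ) = 2 ^ 2 by norm_num, log_pow]
    norm_num
  simp only [potential, mul_one]
  nlinarith [mul_le_mul_of_nonneg_left hlog (show 0 ≤ k / 6 by linarith),
    mul_le_mul_of_nonneg_left hL (show 0 ≤ 5 * k / 6 by linarith), log_two_lt_d9]

end Potential

section Depth

variable {V : Type} {r : V} {parent : V → V}

open Classical in
noncomputable def depth (r : V) (parent : V → V) (v : V) : ℕ :=
  if h : ∃ n, parent^[n] v = r then Nat.find h else 0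

lemma depth_root : depth r parent r = 0 := by
  simp [depth]

def topDownWithFuel {α : Type*} (parent : V → V) (f : V → α → α) (base : α) : ℕ → V → α
  | 0, _ => base
  | n + 1, v => f v (topDownWithFuel parent f base n (parent v))

/-- On an arborescence, the function `g` with `g r = base` and `g v = f v (g (parent v))`
for `v ≠ r`. -/
noncomputable def topDownRec {α : Type*} (r : V) (parent : V → V) (f : V → α → α) (base : α)
    (v : V) : α :=
  topDownWithFuel parent f base (depth r parent v) v

lemma topDownRec_root {α : Type*} (f : V → α → α) (base : α) :
    topDownRec r parent f base r = base := by
  simp [topDownRec, depth_root, topDownWithFuel]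

namespace IsArborescence

lemma induction (harb : IsArborescence r parent) {P : V → Prop} (root : P r)
    (step : ∀ v, v ≠ r → P (parent v) → P v) (v : V) : P v := by
  obtain ⟨n, hn⟩ := harb.2 v
  induction n generalizing v with
  | zero => simp_all
  | succ n ih =>
    rw [Function.iterate_succ_apply] at hn
    rcases eq_or_ne v r with rfl | hv
    · exact root
    · exact step v hv (ih _ hn)

lemma eq_root_of_parent_eq (harb : IsArborescence r parent) {v : V} (h : parent v = v) :
    v = r := by
  obtain ⟨n, hn⟩ := harb.2 v
  rwa [Function.iterate_fixed h] at hn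

lemma depth_parent_add_one (harb : IsArborescence r parent) {v : V} (hv : v ≠ r) :
    depth r parent (parent v) + 1 = depth r parent v := by
  classical
  simp only [depth, dif_pos (harb.2 v), dif_pos (harb.2 (parent v))]
  exact (Nat.find_comp_succ (p := fun n => parent^[n] v = r) (harb.2 v) (harb.2 (parent v))
    hv).symm

lemma depth_iterate_add (harb : IsArborescence r parent) {n : ℕ} {u : V}
    (h : parent^[n] u ≠ r) : depth r parent (parent^[n] u) + n = depth r parent u := by
  induction n generalizing u with
  | zero => rfl
  | succ n ih =>
    rw [Function.iterate_succ_apply] at h ⊢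
    have hu : u ≠ r := by
      rintro rfl
      exact h (by rw [harb.1, Function.iterate_fixed harb.1])
    have := ih h
    have := harb.depth_parent_add_one hu
    omega

lemma topDownRec_of_ne_root (harb : IsArborescence r parent) {α : Type*} (f : V → α → α)
    (base : α) {v : V} (hv : v ≠ r) :
    topDownRec r parent f base v = f v (topDownRec r parent f base (parent v)) := by
  simp only [topDownRec, ← harb.depth_parent_add_one hv, topDownWithFuel]

end IsArborescence

end Depth

section Subtree

variable {V : Type} [Fintype V] {r : V} {parent : V → V}

lemma mem_children {y u : V} : u ∈ children parent y ↔ parent u = y ∧ u ≠ y := by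
  simp [children]

lemma mem_desc {u v : V} : u ∈ desc parent v ↔ ∃ n, parent^[n] u = v := by
  simp [desc]

lemma mem_nonRoot {v : V} : v ∈ nonRoot r ↔ v ≠ r := by
  simp [nonRoot]

lemma self_mem_desc (v : V) : v ∈ desc parent v := mem_desc.2 ⟨0, rfl⟩

lemma one_le_card_desc (v : V) : 1 ≤ (desc parent v).card :=
  card_pos.2 ⟨v, self_mem_desc v⟩

lemma desc_subset_desc_of_mem_children {v z : V} (hz : z ∈ children parent v) :
    desc parent z ⊆ desc parent v := by
  intro u hu
  obtain ⟨n, hn⟩ := mem_desc.1 hu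
  exact mem_desc.2 ⟨n + 1, by rw [Function.iterate_succ_apply', hn, (mem_children.1 hz).1]⟩

lemma sum_nonRoot_eq_sum {M : Type*} [AddCommMonoid M] {f : V → M} (hf : f r = 0) :
    ∑ v ∈ nonRoot r, f v = ∑ v, f v := by
  classical
  rw [show nonRoot r = univ.erase r by ext; simp [mem_nonRoot]]
  exact sum_erase _ hf

namespace IsArborescence

lemma mem_children_parent (harb : IsArborescence r parent) {v : V} (hv : v ≠ r) :
    v ∈ children parent (parent v) :=
  mem_children.2 ⟨rfl, fun h => hv (harb.eq_root_of_parent_eq h.symm)⟩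

lemma ne_root_of_mem_children (harb : IsArborescence r parent) {v z : V}
    (hz : z ∈ children parent v) : z ≠ r := by
  rintro rfl
  obtain ⟨hp, hne⟩ := mem_children.1 hz
  exact hne (hp.symm.trans harb.1).symm

lemma desc_subset_nonRoot (harb : IsArborescence r parent) {v : V} (hv : v ≠ r) :
    desc parent v ⊆ nonRoot r := by
  intro u hu
  obtain ⟨n, hn⟩ := mem_desc.1 hu
  refine mem_nonRoot.2 fun hur => hv ?_
  rw [← hn, hur, Function.iterate_fixed harb.1]

lemma depth_eq_of_mem_children (harb : IsArborescence r parent) {v z : V}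
    (hz : z ∈ children parent v) : depth r parent z = depth r parent v + 1 := by
  rw [← harb.depth_parent_add_one (harb.ne_root_of_mem_children hz), (mem_children.1 hz).1]

lemma depth_eq_add_of_mem_desc (harb : IsArborescence r parent) {u z : V} (hz : z ≠ r)
    (hu : u ∈ desc parent z) :
    ∃ n, depth r parent u = depth r parent z + n ∧ parent^[n] u = z := by
  obtain ⟨n, hn⟩ := mem_desc.1 hu
  exact ⟨n, by rw [← harb.depth_iterate_add (hn ▸ hz), hn], hn⟩

lemma notMem_desc_of_mem_children (harb : IsArborescence r parent) {v z : V}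
    (hz : z ∈ children parent v) : v ∉ desc parent z := by
  intro hv
  obtain ⟨n, hdepth, -⟩ := harb.depth_eq_add_of_mem_desc (harb.ne_root_of_mem_children hz) hv
  have := harb.depth_eq_of_mem_children hz
  omega

lemma pairwiseDisjoint_desc_children (harb : IsArborescence r parent) {v : V} :
    (children parent v : Set V).PairwiseDisjoint (desc parent) := by
  intro z₁ hz₁ z₂ hz₂ hne
  refine disjoint_left.2 fun u hu₁ hu₂ => hne ?_
  obtain ⟨n₁, hd₁, hn₁⟩ := harb.depth_eq_add_of_mem_desc (harb.ne_root_of_mem_children hz₁) hu₁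
  obtain ⟨n₂, hd₂, hn₂⟩ := harb.depth_eq_add_of_mem_desc (harb.ne_root_of_mem_children hz₂) hu₂
  have := harb.depth_eq_of_mem_children hz₁
  have := harb.depth_eq_of_mem_children hz₂
  obtain rfl : n₁ = n₂ := by omega
  rw [← hn₁, ← hn₂]

lemma one_add_sum_card_desc_le (harb : IsArborescence r parent) (v : V) :
    1 + ∑ z ∈ children parent v, (desc parent z).card ≤ (desc parent v).card := by
  classical
  have hsub : insert v ((children parent v).biUnion (desc parent)) ⊆ desc parent v :=
    insert_subset (self_mem_desc v)
      (biUnion_subset.2 fun z hz => desc_subset_desc_of_mem_children hz)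
  have hnotMem : v ∉ (children parent v).biUnion (desc parent) := by
    simp only [mem_biUnion, not_exists, not_and]
    exact fun z hz => harb.notMem_desc_of_mem_children hz
  have := card_le_card hsub
  rw [card_insert_of_notMem hnotMem, card_biUnion harb.pairwiseDisjoint_desc_children] at this
  omega

lemma card_desc_add_one_le_of_mem_children (harb : IsArborescence r parent) {v z : V}
    (hz : z ∈ children parent v) : (desc parent z).card + 1 ≤ (desc parent v).card := by
  have := harb.one_add_sum_card_desc_le v
  have := single_le_sum (f := fun z => (desc parent z).card) (fun z _ => Nat.zero_le _) hz
  omega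

open Classical in
lemma children_eq_filter (harb : IsArborescence r parent) (v : V) :
    children parent v = (nonRoot r).filter (parent · = v) := by
  ext u
  simp only [mem_children, mem_filter, mem_nonRoot]
  constructor
  · rintro ⟨hp, hne⟩
    exact ⟨fun hu => hne (by rw [← hp, hu, harb.1]), hp⟩
  · rintro ⟨hu, hp⟩
    exact ⟨hp, fun h => hu (harb.eq_root_of_parent_eq (hp.trans h.symm))⟩

lemma sum_sum_children (harb : IsArborescence r parent) {M : Type*} [AddCommMonoid M]
    (f : V → M) : ∑ v, ∑ z ∈ children parent v, f z = ∑ z ∈ nonRoot r, f z := by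
  classical
  rw [← sum_fiberwise (nonRoot r) parent f]
  exact sum_congr rfl fun v _ => by rw [harb.children_eq_filter]

end IsArborescence

end Subtree

section Multiplier

variable {V : Type} [Fintype V] {r : V} {parent : V → V} {c w : V → ℝ}

lemma CombinedTriangle.add_two_mul_sum_mul_le (htri : CombinedTriangle r parent c w)
    (h2opt : CombinedTwoOpt r parent c w) {v : V} (hv : v ≠ r) {θ : V → ℝ}
    (hθ : ∀ z ∈ children parent v, 0 ≤ θ z) (hθ_sum : ∑ z ∈ children parent v, θ z ≤ 1) :
    c v + 2 * ∑ z ∈ children parent v, θ z * c z ≤ w v + ∑ z ∈ children parent v, c z := by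
  classical
  set C := ∑ z ∈ children parent v, c z
  have htwo : ∀ z ∈ children parent v, θ z * (c v + 2 * c z) ≤ θ z * (w v + C) := by
    intro z hz
    have := h2opt v hv z hz
    rw [sum_erase_eq_sub hz] at this
    exact mul_le_mul_of_nonneg_left (by linarith) (hθ z hz)
  have hcomb := sum_le_sum htwo
  simp only [mul_add, sum_add_distrib, ← sum_mul] at hcomb
  have htwo_sum : ∑ z ∈ children parent v, θ z * (2 * c z) =
      2 * ∑ z ∈ children parent v, θ z * c z := by
    rw [mul_sum]
    exact sum_congr rfl fun z _ => by ring
  have htri' := mul_le_mul_of_nonneg_left (htri v hv) (sub_nonneg.2 hθ_sum)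
  linarith

noncomputable def share (parent : V → V) (z : V) : ℝ :=
  (desc parent z).card / ((desc parent (parent z)).card - 1 : ℝ)

lemma share_nonneg (z : V) : 0 ≤ share parent z :=
  div_nonneg (Nat.cast_nonneg _) (sub_nonneg.2 (by exact_mod_cast one_le_card_desc _))

lemma IsArborescence.sum_share_children_le_one (harb : IsArborescence r parent) (v : V) :
    ∑ z ∈ children parent v, share parent z ≤ 1 := by
  have hsum : ∑ z ∈ children parent v, share parent z =
      (∑ z ∈ children parent v, ((desc parent z).card : ℝ)) / ((desc parent v).card - 1) := by
    rw [sum_div]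
    exact sum_congr rfl fun z hz => by rw [share, (mem_children.1 hz).1]
  have hcard : 1 + ∑ z ∈ children parent v, ((desc parent z).card : ℝ) ≤
      (desc parent v).card := by
    exact_mod_cast harb.one_add_sum_card_desc_le v
  rw [hsum]
  exact div_le_one_of_le₀ (by linarith)
    (sub_nonneg.2 (by exact_mod_cast one_le_card_desc v))

noncomputable def multiplier (r : V) (parent : V → V) : V → ℝ :=
  topDownRec r parent (fun v x => max 1 (1 + x * (1 - 2 * share parent v))) 0

lemma multiplier_root : multiplier r parent r = 0 :=
  topDownRec_root _ _

lemma IsArborescence.multiplier_of_ne_root (harb : IsArborescence r parent) {v : V}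
    (hv : v ≠ r) : multiplier r parent v =
      max 1 (1 + multiplier r parent (parent v) * (1 - 2 * share parent v)) :=
  harb.topDownRec_of_ne_root _ _ hv

lemma IsArborescence.one_le_multiplier (harb : IsArborescence r parent) {v : V} (hv : v ≠ r) :
    1 ≤ multiplier r parent v := by
  rw [harb.multiplier_of_ne_root hv]
  exact le_max_left _ _

lemma IsArborescence.multiplier_mul_le (harb : IsArborescence r parent)
    (htri : CombinedTriangle r parent c w) (h2opt : CombinedTwoOpt r parent c w) (v : V) :
    multiplier r parent v * c v ≤ multiplier r parent v * w v +
      ∑ z ∈ children parent v,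
        multiplier r parent (parent z) * (1 - 2 * share parent z) * c z := by
  set a := multiplier r parent
  have hsum : ∑ z ∈ children parent v, a (parent z) * (1 - 2 * share parent z) * c z =
      a v * (∑ z ∈ children parent v, c z - 2 * ∑ z ∈ children parent v, share parent z * c z) := by
    rw [mul_sub, mul_sum, mul_sum, mul_sum, ← sum_sub_distrib]
    exact sum_congr rfl fun z hz => by rw [(mem_children.1 hz).1]; ring
  rw [hsum, ← mul_add]
  rcases eq_or_ne v r with rfl | hv
  · simp [a, multiplier_root]
  · have := htri.add_two_mul_sum_mul_le h2opt hv (fun z _ => share_nonneg z)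
      (harb.sum_share_children_le_one v)
    exact mul_le_mul_of_nonneg_left (by linarith) (zero_le_one.trans (harb.one_le_multiplier hv))

lemma IsArborescence.sum_le_sum_multiplier_mul (harb : IsArborescence r parent)
    (hc : ∀ v, v ≠ r → 0 ≤ c v) (htri : CombinedTriangle r parent c w)
    (h2opt : CombinedTwoOpt r parent c w) :
    ∑ v ∈ nonRoot r, c v ≤ ∑ v ∈ nonRoot r, multiplier r parent v * w v := by
  set a := multiplier r parent
  set b := fun z => a (parent z) * (1 - 2 * share parent z)
  have hb : ∀ z ∈ nonRoot r, c z ≤ a z * c z - b z * c z := by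
    intro z hz
    have hzr := mem_nonRoot.1 hz
    have : 1 + b z ≤ a z := (le_max_right _ _).trans_eq (harb.multiplier_of_ne_root hzr).symm
    nlinarith [hc z hzr]
  have hledger := sum_le_sum fun v (_ : v ∈ univ) => harb.multiplier_mul_le htri h2opt v
  rw [sum_add_distrib, harb.sum_sum_children] at hledger
  calc ∑ v ∈ nonRoot r, c v ≤ ∑ z ∈ nonRoot r, (a z * c z - b z * c z) := sum_le_sum hb
    _ = ∑ v, a v * c v - ∑ z ∈ nonRoot r, b z * c z := by
      rw [sum_sub_distrib, sum_nonRoot_eq_sum (by simp [a, multiplier_root])]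
    _ ≤ ∑ v, a v * w v := by linarith
    _ = ∑ v ∈ nonRoot r, a v * w v := (sum_nonRoot_eq_sum (by simp [a, multiplier_root])).symm

lemma IsArborescence.potential_multiplier_le (harb : IsArborescence r parent) {v : V}
    (hv : v ≠ r) :
    potential (multiplier r parent v) ≤
      potential 1 + log (nonRoot r).card - log (desc parent v).card := by
  induction v using harb.induction with
  | root => exact absurd rfl hv
  | step v _ ih =>
    have hm_v : (1 : ℝ) ≤ (desc parent v).card := by exact_mod_cast one_le_card_desc v
    rw [harb.multiplier_of_ne_root hv]
    rcases eq_or_ne (parent v) r with hp | hp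
    · have hle : ((desc parent v).card : ℝ) ≤ (nonRoot r).card := by
        exact_mod_cast card_le_card (harb.desc_subset_nonRoot hv)
      rw [hp, multiplier_root, zero_mul, add_zero, max_self]
      linarith [log_le_log (by linarith) hle]
    · have hlt : ((desc parent v).card : ℝ) ≤ (desc parent (parent v)).card - 1 := by
        rw [le_sub_iff_add_le]
        exact_mod_cast harb.card_desc_add_one_le_of_mem_children (harb.mem_children_parent hv)
      have hstep := potential_max_one_le (harb.one_le_multiplier hp) (by linarith) hlt
      have := log_le_log (by linarith) (sub_le_self ((desc parent (parent v)).card : ℝ) zero_le_one)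
      rw [share, ← mul_div_assoc]
      linarith [ih hp]

end Multiplier

theorem arborescence_counting_bound {V : Type} [Fintype V]
    (r : V) (parent : V → V) (c w : V → ℝ)
    (harb : IsArborescence r parent)
    (hne : (nonRoot r).Nonempty)
    (hc : ∀ v : V, v ≠ r → 0 < c v) (hw : ∀ v : V, v ≠ r → 0 < w v)
    (htri : CombinedTriangle r parent c w)
    (h2opt : CombinedTwoOpt r parent c w)
    (k : ℝ) (hkdef : k = (∑ v ∈ nonRoot r, c v) / ∑ v ∈ nonRoot r, w v)
    (hk : 18 ≤ k) :
    (k / 6) ^ (k / 6) ≤ ((nonRoot r).card : ℝ) := by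
  have hw_sum : 0 < ∑ v ∈ nonRoot r, w v := sum_pos (fun v hv => hw v (mem_nonRoot.1 hv)) hne
  obtain ⟨v, hv, hkv⟩ : ∃ v ∈ nonRoot r, k * w v ≤ multiplier r parent v * w v := by
    refine exists_le_of_sum_le hne ?_
    rw [← mul_sum, hkdef, div_mul_cancel₀ _ hw_sum.ne']
    exact harb.sum_le_sum_multiplier_mul (fun v hv => (hc v hv).le) htri h2opt
  have hvr := mem_nonRoot.1 hv
  have hka : k ≤ multiplier r parent v := le_of_mul_le_mul_right hkv (hw v hvr)
  have hm_v : (1 : ℝ) ≤ (desc parent v).card := by exact_mod_cast one_le_card_desc v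
  have hm : (0 : ℝ) < (nonRoot r).card := by exact_mod_cast hne.card_pos
  rw [← log_le_log_iff (by positivity) hm, log_rpow (by positivity)]
  linarith [potential_one_add_mul_log_le (show 2 ≤ k by linarith),
    potential_le_potential (by linarith) hka, harb.potential_multiplier_le hvr, log_nonneg hm_v]
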